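/- arXiv:2204.13806 — 3 statements merged into one kernel-verified Lean document; each statement's English description precedes it below -/
import Mathlib

section
/- Let n_p ≥ 1 be an integer, let d_j, d_k be positive real numbers, and define D_j = {d_j·e^{iθ} : θ ∈ Φ_{n_p}} and D_k = {d_k·e^{iθ} : θ ∈ Φ_{n_p}}, where Φ_{n_p} = {2πm/n_p : m ∈ {0,…,n_p−1}}. Then the set Ψ_{j,k} = {ψ(a,b) : a ∈ D_j, b ∈ D_k} has cardinality ⌈(n_p+1)/2⌉, where ψ(a,b) = (1/4)|a+b|² + (1/8)|a−b|². -/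
noncomputable def psi (a b : ℂ) : ℝ :=
  (1/4) * ‖a + b‖ ^ 2 + (1/8) * ‖a - b‖ ^ 2

lemma psi_eq (dj dk θ1 θ2 : ℝ) :
    psi ((dj:ℂ) * Complex.exp ((θ1:ℂ) * Complex.I)) ((dk:ℂ) * Complex.exp ((θ2:ℂ) * Complex.I))
      = 3/8 * (dj^2 + dk^2) + 1/4 * (dj*dk) * Real.cos (θ1 - θ2) := by
  simp only [psi, Complex.sq_norm, Complex.exp_mul_I, Complex.normSq_apply]
  simp [Complex.cos_ofReal_re, Complex.sin_ofReal_re, Real.cos_sub, Complex.add_re, Complex.add_im,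
    Complex.mul_re, Complex.mul_im, Complex.sub_re, Complex.sub_im]
  nlinarith [Real.sin_sq_add_cos_sq θ1, Real.sin_sq_add_cos_sq θ2]

theorem card_Psi_jk (np : ℕ) (hnp : 1 ≤ np) (dj dk : ℝ) (hdj : 0 < dj) (hdk : 0 < dk) :
    Set.ncard {ζ : ℝ | ∃ a ∈ {z : ℂ | ∃ m < np, z = (dj : ℂ) *
        Complex.exp (((2 * Real.pi * m / np : ℝ) : ℂ) * Complex.I)},
      ∃ b ∈ {z : ℂ | ∃ m < np, z = (dk : ℂ) *
        Complex.exp (((2 * Real.pi * m / np : ℝ) : ℂ) * Complex.I)},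
      ζ = psi a b} = ⌈((np : ℝ) + 1) / 2⌉₊ := by
  have hnp0 : (np:ℝ) ≠ 0 := by positivity
  set g : ℕ → ℝ := fun m => Real.cos (2 * Real.pi * m / np) with hg
  set f : ℕ → ℝ := fun m => 3/8 * (dj^2 + dk^2) + 1/4 * (dj*dk) * g m with hf
  have hgper : ∀ (m1 m2 : ℕ), m1 < np → m2 < np →
      Real.cos (2 * Real.pi * m1 / np - 2 * Real.pi * m2 / np) = g ((m1 + (np - m2)) % np) := by
    intro m1 m2 h1 h2
    set m := (m1 + (np - m2)) % np with hm
    obtain ⟨k, hk⟩ : ∃ k : ℤ, (m1 : ℤ) - m2 = m + np * k := by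
      have key := Nat.mod_add_div (m1 + (np - m2)) np
      set t := (m1 + (np - m2)) / np with htdef
      have ht : t < 2 := by
        rw [htdef]
        apply Nat.div_lt_of_lt_mul
        omega
      interval_cases t
      · exact ⟨-1, by push_cast; omega⟩
      · exact ⟨0, by push_cast; omega⟩
    have hr : (m1:ℝ) - (m2:ℝ) = (m:ℝ) + (np:ℝ) * (k:ℝ) := by
      exact_mod_cast congrArg (fun z : ℤ => (z:ℝ)) hk
    have harg : 2 * Real.pi * m1 / np - 2 * Real.pi * m2 / np
        = 2 * Real.pi * m / np + k * (2 * Real.pi) := by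
      field_simp
      linear_combination hr
    rw [harg, Real.cos_add_int_mul_two_pi]
  have hset : {ζ : ℝ | ∃ a ∈ {z : ℂ | ∃ m < np, z = (dj : ℂ) *
        Complex.exp (((2 * Real.pi * m / np : ℝ) : ℂ) * Complex.I)},
      ∃ b ∈ {z : ℂ | ∃ m < np, z = (dk : ℂ) *
        Complex.exp (((2 * Real.pi * m / np : ℝ) : ℂ) * Complex.I)},
      ζ = psi a b} = ↑(Finset.image f (Finset.range np)) := by
    ext ζ
    simp only [Set.mem_setOf_eq, Finset.coe_image, Set.mem_image, Finset.mem_coe,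
      Finset.mem_range]
    constructor
    · rintro ⟨a, ⟨m1, h1, rfl⟩, b, ⟨m2, h2, rfl⟩, rfl⟩
      refine ⟨(m1 + (np - m2)) % np, Nat.mod_lt _ (by omega), ?_⟩
      rw [psi_eq]
      simp only [hf]
      rw [← hgper m1 m2 h1 h2]
    · rintro ⟨m, hm, rfl⟩
      refine ⟨(dj : ℂ) * Complex.exp (((2 * Real.pi * m / np : ℝ) : ℂ) * Complex.I),
        ⟨m, hm, rfl⟩,
        (dk : ℂ) * Complex.exp (((2 * Real.pi * 0 / np : ℝ) : ℂ) * Complex.I),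
        ⟨0, by omega, by norm_num⟩, ?_⟩
      rw [psi_eq]
      simp only [hf, hg]
      norm_num
  rw [hset, Set.ncard_coe_finset]
  have hinj : Function.Injective (fun x : ℝ => 3/8 * (dj^2 + dk^2) + 1/4 * (dj*dk) * x) := by
    intro x y hxy
    simp only at hxy
    have h1 : 1/4 * (dj*dk) * x = 1/4 * (dj*dk) * y := by linarith
    exact mul_left_cancel₀ (by positivity) h1
  have hfg : Finset.image f (Finset.range np)
      = Finset.image (fun x : ℝ => 3/8 * (dj^2 + dk^2) + 1/4 * (dj*dk) * x)
          (Finset.image g (Finset.range np)) := by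
    rw [Finset.image_image]; rfl
  rw [hfg, Finset.card_image_of_injective _ hinj]
  have hgsym : ∀ m ≤ np, g (np - m) = g m := by
    intro m hm
    have hcast : (2 * Real.pi * (np - m : ℕ) / np : ℝ) = 2 * Real.pi - 2 * Real.pi * m / np := by
      push_cast [Nat.cast_sub hm]
      field_simp
    simp only [hg, hcast]
    rw [Real.cos_sub]
    simp [Real.cos_two_pi, Real.sin_two_pi]
  have himg : Finset.image g (Finset.range np) = Finset.image g (Finset.range (np/2 + 1)) := by
    apply Finset.Subset.antisymm
    · intro x hx
      simp only [Finset.mem_image, Finset.mem_range] at hx ⊢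
      obtain ⟨m, hm, rfl⟩ := hx
      by_cases h : m ≤ np / 2
      · exact ⟨m, by omega, rfl⟩
      · exact ⟨np - m, by omega, hgsym m hm.le⟩
    · exact Finset.image_subset_image (Finset.range_subset_range.mpr (by omega))
  rw [himg]
  have hargInj : ∀ a b : ℕ, 2*Real.pi*(a:ℝ)/np = 2*Real.pi*(b:ℝ)/np → a = b := by
    intro a b h
    have h2 : (0:ℝ) < 2*Real.pi/np := by positivity
    have h3 : (2*Real.pi/np) * a = (2*Real.pi/np) * b := by
      field_simp at h ⊢; linarith
    have : (a:ℝ) = b := mul_left_cancel₀ (ne_of_gt h2) h3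
    exact_mod_cast this
  have hinjOn : Set.InjOn g ↑(Finset.range (np/2 + 1)) := by
    intro m1 hm1 m2 hm2 heq
    simp only [Finset.coe_range, Set.mem_Iio] at hm1 hm2
    have hb : ∀ m : ℕ, m < np/2 + 1 → 2 * Real.pi * (m:ℝ) / np ∈ Set.Icc 0 Real.pi := by
      intro m hm
      constructor
      · positivity
      · rw [div_le_iff₀ (by positivity)]
        have : (m:ℝ) * 2 ≤ np := by
          have h2 : (2*m : ℕ) ≤ np := by omega
          exact_mod_cast by push_cast at h2 ⊢; linarith
        nlinarith [Real.pi_pos]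
    exact hargInj m1 m2 (Real.injOn_cos (hb m1 hm1) (hb m2 hm2) heq)
  rw [Finset.card_image_of_injOn hinjOn, Finset.card_range]
  obtain ⟨q, hq | hq⟩ := Nat.even_or_odd' np <;> subst hq
  · have h1 : (2*q)/2 + 1 = q + 1 := by omega
    rw [h1]
    symm
    rw [Nat.ceil_eq_iff (by omega)]
    refine ⟨by push_cast; linarith, by push_cast; linarith⟩
  · have h1 : (2*q+1)/2 + 1 = q + 1 := by omega
    rw [h1, show (((2*q+1:ℕ):ℝ)+1)/2 = ((q+1:ℕ):ℝ) by push_cast; ring, Nat.ceil_natCast]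
end

section
/- Let K be an (n_r,n_p)-SQAM constellation with distinct positive radii and n_p ≥ 2 phases, and n ≥ 2. Each square-law equivalence class C ⊆ Kⁿ contains exactly one standard vector, i.e., exactly one vector (s_0,…,s_{n−1}) with s_0 a positive real number and arg(s_{ℓ+1}·conj(s_ℓ)) ∈ [0,π] for all ℓ ∈ {0,…,n−2}. -/
/-- The argument of a complex number taken in `[0, 2π)`. -/
noncomputable def arg2pi (w : ℂ) : ℝ :=
  if Complex.arg w < 0 then Complex.arg w + 2 * Real.pi else Complex.arg w

/-- Two `n`-tuples are square-law equivalent iff they have the same signature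
`Υ(x) = (|x₀|², ψ(x₀,x₁), |x₁|², …, |x_{n−1}|²)`. -/
def SqEquiv {n : ℕ} (x y : Fin n → ℂ) : Prop :=
  (∀ i, ‖x i‖ ^ 2 = ‖y i‖ ^ 2) ∧
  ∀ ℓ : ℕ, ∀ h : ℓ + 1 < n,
    psi (x ⟨ℓ, by omega⟩) (x ⟨ℓ + 1, h⟩) = psi (y ⟨ℓ, by omega⟩) (y ⟨ℓ + 1, h⟩)

/-- A vector is standard if its first component is a positive real and all successive
phase increments lie in `[0, π]`. -/
def Standard {n : ℕ} (s : Fin n → ℂ) : Prop :=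
  (∀ h : 0 < n, (s ⟨0, h⟩).im = 0 ∧ 0 < (s ⟨0, h⟩).re) ∧
  ∀ ℓ : ℕ, ∀ h : ℓ + 1 < n,
    arg2pi (s ⟨ℓ + 1, h⟩ * (starRingEnd ℂ) (s ⟨ℓ, by omega⟩)) ∈ Set.Icc 0 Real.pi

/-- The `(n_r, n_p)`-SQAM constellation with radius set `D` and `np` phases. -/
def sqamK (D : Finset ℝ) (np : ℕ) : Set ℂ :=
  {z | ∃ d ∈ D, ∃ m < np, z = (d : ℂ) * Complex.exp (((2 * Real.pi * m / np : ℝ) : ℂ) * Complex.I)}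

/- ### Auxiliary lemmas -/

open Complex

lemma psi_eq_s12 (a b : ℂ) :
    psi a b = 3/8 * (‖a‖ ^ 2 + ‖b‖ ^ 2) + 1/4 * (b * (starRingEnd ℂ) a).re := by
  unfold psi
  rw [Complex.sq_norm, Complex.sq_norm, Complex.normSq_add, Complex.normSq_sub,
    Complex.sq_norm, Complex.sq_norm]
  simp [Complex.mul_re, Complex.conj_re, Complex.conj_im]
  ring

lemma re_of_psi {a b a' b' : ℂ} (ha : ‖a‖ = ‖a'‖)
    (hb : ‖b‖ = ‖b'‖) (h : psi a b = psi a' b') :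
    (b * (starRingEnd ℂ) a).re = (b' * (starRingEnd ℂ) a').re := by
  rw [psi_eq_s12, psi_eq_s12, ha, hb] at h
  linarith

lemma sq_abs_eq {a b : ℝ} (ha : 0 ≤ a) (hb : 0 ≤ b) (h : a ^ 2 = b ^ 2) : a = b := by
  nlinarith [sq_nonneg (a - b)]

lemma arg2pi_mem_of_im_nonneg {w : ℂ} (h : 0 ≤ w.im) : arg2pi w ∈ Set.Icc 0 Real.pi := by
  have h1 : 0 ≤ Complex.arg w := Complex.arg_nonneg_iff.mpr h
  have h2 : Complex.arg w ≤ Real.pi := Complex.arg_le_pi w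
  unfold arg2pi
  rw [if_neg (not_lt.mpr h1)]
  exact ⟨h1, h2⟩

lemma im_nonneg_of_arg2pi {w : ℂ} (h : arg2pi w ∈ Set.Icc 0 Real.pi) : 0 ≤ w.im := by
  unfold arg2pi at h
  split_ifs at h with hc
  · exfalso
    have := Complex.neg_pi_lt_arg w
    have hpi := Real.pi_pos
    have := h.2
    linarith
  · exact Complex.arg_nonneg_iff.mp (not_lt.mp hc)

lemma eq_of_abs_re_im {w w' : ℂ} (habs : ‖w‖ = ‖w'‖)
    (hre : w.re = w'.re) (him : 0 ≤ w.im) (him' : 0 ≤ w'.im) : w = w' := by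
  have h2 : ‖w‖ ^ 2 = ‖w'‖ ^ 2 := by rw [habs]
  rw [Complex.sq_norm, Complex.sq_norm, Complex.normSq_apply, Complex.normSq_apply, hre] at h2
  have : w.im = w'.im := by nlinarith [sq_nonneg (w.im - w'.im)]
  exact Complex.ext hre this

lemma pos_real_eq {z w : ℂ} (hz : z.im = 0) (hz' : 0 < z.re) (hw : w.im = 0)
    (hw' : 0 < w.re) (h : ‖z‖ = ‖w‖) : z = w := by
  have h1 : ‖z‖ = z.re := by
    rw [Complex.norm_def, Complex.normSq_apply, hz]
    rw [show z.re * z.re + 0 * 0 = z.re ^ 2 by ring]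
    exact Real.sqrt_sq hz'.le
  have h2 : ‖w‖ = w.re := by
    rw [Complex.norm_def, Complex.normSq_apply, hw]
    rw [show w.re * w.re + 0 * 0 = w.re ^ 2 by ring]
    exact Real.sqrt_sq hw'.le
  exact Complex.ext (by rw [← h1, ← h2, h]) (by rw [hz, hw])

lemma sqam_abs {D : Finset ℝ} (hD : ∀ d ∈ D, 0 < d) {np : ℕ} {z : ℂ}
    (hz : z ∈ sqamK D np) : 0 < ‖z‖ ∧ ‖z‖ ∈ D := by
  obtain ⟨d, hd, m, hm, rfl⟩ := hz
  have : ‖(d : ℂ) * Complex.exp (((2 * Real.pi * m / np : ℝ) : ℂ) * Complex.I)‖ = d := by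
    rw [norm_mul, Complex.norm_exp_ofReal_mul_I, mul_one, Complex.norm_real, Real.norm_eq_abs,
      abs_of_pos (hD d hd)]
  rw [this]
  exact ⟨hD d hd, hd⟩

lemma mem_sqamK_int {D : Finset ℝ} {np : ℕ} (hnp : 0 < np) {d : ℝ} (hd : d ∈ D) (M : ℤ) :
    (d : ℂ) * Complex.exp (((2 * Real.pi * M / np : ℝ) : ℂ) * Complex.I) ∈ sqamK D np := by
  refine ⟨d, hd, (M % np).toNat, ?_, ?_⟩
  · have h1 : M % np < np := Int.emod_lt_of_pos M (by exact_mod_cast hnp)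
    omega
  · congr 1
    have hnn : (0:ℤ) ≤ M % np := Int.emod_nonneg M (by positivity)
    have hMeq : (M : ℝ) = np * (M / np : ℤ) + ((M % np).toNat : ℝ) := by
      have h0 := Int.mul_ediv_add_emod M np
      have h1 : (M % np).toNat = M % np := Int.toNat_of_nonneg hnn
      have h2 : (M : ℝ) = (np : ℝ) * ((M / np : ℤ) : ℝ) + ((M % np : ℤ) : ℝ) := by
        exact_mod_cast h0.symm
      rw [h2]
      congr 1
      exact_mod_cast congrArg (fun t : ℤ => (t : ℝ)) h1.symm
    have hkey : ((2 * Real.pi * M / np : ℝ) : ℂ) * Complex.I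
        = ((2 * Real.pi * ((M % np).toNat : ℝ) / np : ℝ) : ℂ) * Complex.I
          + ((M / np : ℤ) : ℂ) * (2 * (Real.pi : ℂ) * Complex.I) := by
      have hnp' : (np : ℂ) ≠ 0 := by exact_mod_cast hnp.ne'
      push_cast [hMeq]
      field_simp
      ring
    rw [hkey, Complex.exp_add, Complex.exp_int_mul_two_pi_mul_I, mul_one]

/- ### The construction -/

noncomputable def stdV (X : ℕ → ℂ) (k : ℕ) : ℂ :=
  X (k+1) * (starRingEnd ℂ) (X k)
    / ((‖X (k+1)‖ * ‖X k‖ : ℝ) : ℂ)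

noncomputable def stdStep (X : ℕ → ℂ) (k : ℕ) : ℂ :=
  if 0 ≤ (stdV X k).im then stdV X k else (starRingEnd ℂ) (stdV X k)

noncomputable def stdSeq (X : ℕ → ℂ) : ℕ → ℂ
  | 0 => ((‖X 0‖ : ℝ) : ℂ)
  | k+1 => ((‖X (k+1)‖ / ‖X k‖ : ℝ) : ℂ) * stdStep X k * stdSeq X k

lemma stdV_abs (X : ℕ → ℂ) (hX : ∀ k, X k ≠ 0) (k : ℕ) :
    ‖stdV X k‖ = 1 := by
  have h1 : 0 < ‖X (k+1)‖ := norm_pos_iff.mpr (hX (k+1))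
  have h2 : 0 < ‖X k‖ := norm_pos_iff.mpr (hX k)
  unfold stdV
  rw [norm_div, norm_mul, Complex.norm_conj, Complex.norm_real, Real.norm_eq_abs,
    abs_of_pos (by positivity)]
  field_simp

lemma stdStep_abs (X : ℕ → ℂ) (hX : ∀ k, X k ≠ 0) (k : ℕ) :
    ‖stdStep X k‖ = 1 := by
  unfold stdStep
  split_ifs with h
  · exact stdV_abs X hX k
  · rw [Complex.norm_conj]; exact stdV_abs X hX k

lemma stdStep_im (X : ℕ → ℂ) (k : ℕ) : 0 ≤ (stdStep X k).im := by
  unfold stdStep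
  split_ifs with h
  · exact h
  · rw [Complex.conj_im]; linarith [not_le.mp h]

lemma stdStep_re (X : ℕ → ℂ) (k : ℕ) :
    (stdStep X k).re = (X (k+1) * (starRingEnd ℂ) (X k)).re
      / (‖X (k+1)‖ * ‖X k‖) := by
  have : (stdV X k).re
      = (X (k+1) * (starRingEnd ℂ) (X k)).re
        / (‖X (k+1)‖ * ‖X k‖) := by
    unfold stdV
    rw [Complex.div_ofReal_re]
  unfold stdStep
  split_ifs with h
  · exact this
  · rw [Complex.conj_re]; exact this

lemma stdSeq_abs (X : ℕ → ℂ) (hX : ∀ k, X k ≠ 0) (k : ℕ) :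
    ‖stdSeq X k‖ = ‖X k‖ := by
  induction k with
  | zero =>
      show ‖((‖X 0‖ : ℝ) : ℂ)‖ = _
      rw [Complex.norm_real, Real.norm_eq_abs, _root_.abs_of_nonneg (norm_nonneg _)]
  | succ k ih =>
      have h1 : 0 < ‖X (k+1)‖ := norm_pos_iff.mpr (hX (k+1))
      have h2 : 0 < ‖X k‖ := norm_pos_iff.mpr (hX k)
      show ‖((‖X (k+1)‖ / ‖X k‖ : ℝ) : ℂ)
        * stdStep X k * stdSeq X k‖ = _
      rw [norm_mul, norm_mul, Complex.norm_real, Real.norm_eq_abs, stdStep_abs X hX, ih,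
        _root_.abs_of_nonneg (by positivity)]
      field_simp

lemma stdSeq_prod (X : ℕ → ℂ) (hX : ∀ k, X k ≠ 0) (k : ℕ) :
    stdSeq X (k+1) * (starRingEnd ℂ) (stdSeq X k)
      = ((‖X (k+1)‖ * ‖X k‖ : ℝ) : ℂ) * stdStep X k := by
  have h2 : 0 < ‖X k‖ := norm_pos_iff.mpr (hX k)
  have hns : Complex.normSq (stdSeq X k) = ‖X k‖ ^ 2 := by
    rw [← Complex.sq_norm, stdSeq_abs X hX]
  show ((‖X (k+1)‖ / ‖X k‖ : ℝ) : ℂ)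
      * stdStep X k * stdSeq X k * (starRingEnd ℂ) (stdSeq X k) = _
  rw [mul_assoc, Complex.mul_conj, hns]
  have hC : (‖X k‖ : ℂ) ≠ 0 := by
    exact_mod_cast h2.ne'
  push_cast
  field_simp

lemma stdSeq_prod_re (X : ℕ → ℂ) (hX : ∀ k, X k ≠ 0) (k : ℕ) :
    (stdSeq X (k+1) * (starRingEnd ℂ) (stdSeq X k)).re
      = (X (k+1) * (starRingEnd ℂ) (X k)).re := by
  have h1 : 0 < ‖X (k+1)‖ := norm_pos_iff.mpr (hX (k+1))
  have h2 : 0 < ‖X k‖ := norm_pos_iff.mpr (hX k)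
  rw [stdSeq_prod X hX, Complex.re_ofReal_mul, stdStep_re]
  field_simp

lemma stdSeq_prod_im (X : ℕ → ℂ) (hX : ∀ k, X k ≠ 0) (k : ℕ) :
    0 ≤ (stdSeq X (k+1) * (starRingEnd ℂ) (stdSeq X k)).im := by
  have h1 : 0 < ‖X (k+1)‖ := norm_pos_iff.mpr (hX (k+1))
  have h2 : 0 < ‖X k‖ := norm_pos_iff.mpr (hX k)
  rw [stdSeq_prod X hX, Complex.im_ofReal_mul]
  exact mul_nonneg (by positivity) (stdStep_im X k)

lemma conj_exp_ofReal_mul_I (t : ℝ) :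
    (starRingEnd ℂ) (Complex.exp ((t : ℂ) * Complex.I))
      = Complex.exp (((-t : ℝ) : ℂ) * Complex.I) := by
  rw [← Complex.exp_conj]
  congr 1
  simp [map_mul, Complex.conj_ofReal, Complex.conj_I]

lemma exp_ofReal_mul_I_add (a b : ℝ) :
    Complex.exp ((a : ℂ) * Complex.I) * Complex.exp ((b : ℂ) * Complex.I)
      = Complex.exp (((a + b : ℝ) : ℂ) * Complex.I) := by
  rw [← Complex.exp_add]
  congr 1
  push_cast
  ring

/-- The exponential-form invariant needed for membership. -/
lemma stdSeq_exp {D : Finset ℝ} (hD : ∀ d ∈ D, 0 < d) {np n : ℕ} (hnp : 0 < np)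
    (X : ℕ → ℂ) (hX : ∀ k, X k ≠ 0) (hmem : ∀ k, k < n → X k ∈ sqamK D np) :
    ∀ k, k < n → ∃ M : ℤ, stdSeq X k
      = ((‖X k‖ : ℝ) : ℂ) * Complex.exp (((2 * Real.pi * M / np : ℝ) : ℂ) * Complex.I) := by
  intro k
  induction k with
  | zero =>
      intro _
      refine ⟨0, ?_⟩
      show ((‖X 0‖ : ℝ) : ℂ) = _
      norm_num [Complex.exp_zero]
  | succ k ih =>
      intro h
      have hk : k < n := by omega
      obtain ⟨M, hM⟩ := ih hk
      obtain ⟨d, hd, m, hm, hXk⟩ := hmem k hk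
      obtain ⟨d', hd', m', hm', hXk'⟩ := hmem (k+1) h
      have hdpos := hD d hd
      have hdpos' := hD d' hd'
      have habsk : ‖X k‖ = d := by
        rw [hXk, norm_mul, Complex.norm_exp_ofReal_mul_I, mul_one, Complex.norm_real, Real.norm_eq_abs,
          abs_of_pos hdpos]
      have habsk' : ‖X (k+1)‖ = d' := by
        rw [hXk', norm_mul, Complex.norm_exp_ofReal_mul_I, mul_one, Complex.norm_real, Real.norm_eq_abs,
          abs_of_pos hdpos']
      set θ : ℝ := 2 * Real.pi * m / np with hθ
      set θ' : ℝ := 2 * Real.pi * m' / np with hθ'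
      have hv : stdV X k = Complex.exp (((θ' - θ : ℝ) : ℂ) * Complex.I) := by
        unfold stdV
        rw [habsk, habsk', hXk, hXk', map_mul, Complex.conj_ofReal,
          conj_exp_ofReal_mul_I]
        have hdC : (d : ℂ) ≠ 0 := by exact_mod_cast hdpos.ne'
        have hdC' : (d' : ℂ) ≠ 0 := by exact_mod_cast hdpos'.ne'
        rw [show (d' : ℂ) * Complex.exp ((θ' : ℂ) * Complex.I)
            * ((d : ℂ) * Complex.exp (((-θ : ℝ) : ℂ) * Complex.I))
            = ((d' : ℂ) * (d : ℂ))
              * (Complex.exp ((θ' : ℂ) * Complex.I)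
                * Complex.exp (((-θ : ℝ) : ℂ) * Complex.I)) by ring,
          exp_ofReal_mul_I_add]
        have : ((d' * d : ℝ) : ℂ) ≠ 0 := by
          push_cast
          exact mul_ne_zero hdC' hdC
        rw [show (θ' + -θ : ℝ) = θ' - θ by ring]
        push_cast
        field_simp
      have hstep : ∃ L : ℤ, stdStep X k
          = Complex.exp (((2 * Real.pi * (L : ℝ) / np : ℝ) : ℂ) * Complex.I) := by
        unfold stdStep
        split_ifs with hcase
        · refine ⟨(m' : ℤ) - m, ?_⟩
          rw [hv]
          congr 2
          rw [hθ, hθ']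
          push_cast
          ring
        · refine ⟨(m : ℤ) - m', ?_⟩
          rw [hv, conj_exp_ofReal_mul_I]
          congr 2
          rw [hθ, hθ']
          push_cast
          ring
      obtain ⟨L, hL⟩ := hstep
      refine ⟨L + M, ?_⟩
      show ((‖X (k+1)‖ / ‖X k‖ : ℝ) : ℂ)
        * stdStep X k * stdSeq X k = _
      rw [hM, hL, habsk, habsk']
      have hab : (2 * Real.pi * ((L : ℝ)) / np) + (2 * Real.pi * (M : ℝ) / np)
          = 2 * Real.pi * (((L + M : ℤ) : ℝ)) / np := by
        push_cast
        ring
      rw [show ((d' / d : ℝ) : ℂ)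
          * Complex.exp (((2 * Real.pi * (L : ℝ) / np : ℝ) : ℂ) * Complex.I)
          * ((d : ℂ) * Complex.exp (((2 * Real.pi * (M : ℝ) / np : ℝ) : ℂ) * Complex.I))
          = (((d' / d : ℝ) : ℂ) * (d : ℂ))
            * (Complex.exp (((2 * Real.pi * (L : ℝ) / np : ℝ) : ℂ) * Complex.I)
              * Complex.exp (((2 * Real.pi * (M : ℝ) / np : ℝ) : ℂ) * Complex.I)) by ring,
        exp_ofReal_mul_I_add, hab]
      have hdC : (d : ℂ) ≠ 0 := by exact_mod_cast (hD d hd).ne'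
      push_cast
      field_simp

/-- Uniqueness. -/
lemma std_unique {n : ℕ} (y z : Fin n → ℂ) (hnz : ∀ i, y i ≠ 0)
    (habs : ∀ i, ‖y i‖ = ‖z i‖)
    (hre : ∀ ℓ : ℕ, ∀ h : ℓ + 1 < n,
      (y ⟨ℓ + 1, h⟩ * (starRingEnd ℂ) (y ⟨ℓ, by omega⟩)).re
        = (z ⟨ℓ + 1, h⟩ * (starRingEnd ℂ) (z ⟨ℓ, by omega⟩)).re)
    (hy : Standard y) (hz : Standard z) : y = z := by
  funext i
  obtain ⟨k, hk⟩ := i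
  induction k with
  | zero =>
      obtain ⟨h1, h2⟩ := hy.1 hk
      obtain ⟨h3, h4⟩ := hz.1 hk
      exact pos_real_eq h1 h2 h3 h4 (habs ⟨0, hk⟩)
  | succ k ih =>
      have hk' : k < n := by omega
      have hyz : y ⟨k, hk'⟩ = z ⟨k, hk'⟩ := ih hk'
      have hyne : y ⟨k, hk'⟩ ≠ 0 := hnz _
      have hzne : z ⟨k, hk'⟩ ≠ 0 := by
        intro h0
        apply hyne
        have := habs ⟨k, hk'⟩
        rw [h0] at this
        simp only [norm_zero] at this
        exact norm_eq_zero.mp this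
      have habsw : ‖y ⟨k+1, hk⟩ * (starRingEnd ℂ) (y ⟨k, hk'⟩)‖
          = ‖z ⟨k+1, hk⟩ * (starRingEnd ℂ) (z ⟨k, hk'⟩)‖ := by
        rw [norm_mul, norm_mul, Complex.norm_conj, Complex.norm_conj,
          habs ⟨k+1, hk⟩, habs ⟨k, hk'⟩]
      have hrew := hre k hk
      have himy := im_nonneg_of_arg2pi (hy.2 k hk)
      have himz := im_nonneg_of_arg2pi (hz.2 k hk)
      have hw : y ⟨k+1, hk⟩ * (starRingEnd ℂ) (y ⟨k, hk'⟩)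
          = z ⟨k+1, hk⟩ * (starRingEnd ℂ) (z ⟨k, hk'⟩) :=
        eq_of_abs_re_im habsw hrew himy himz
      rw [hyz] at hw
      have hcne : (starRingEnd ℂ) (z ⟨k, hk'⟩) ≠ 0 := by
        intro h0
        apply hzne
        have := congrArg (starRingEnd ℂ) h0
        simpa using this
      exact mul_right_cancel₀ hcne hw

theorem unique_standard_representative (D : Finset ℝ) (hD : ∀ d ∈ D, 0 < d)
    (np n : ℕ) (hnp : 2 ≤ np) (hn : 2 ≤ n)
    (x : Fin n → ℂ) (hx : ∀ i, x i ∈ sqamK D np) :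
    ∃! s : Fin n → ℂ, (∀ i, s i ∈ sqamK D np) ∧ SqEquiv s x ∧ Standard s := by
  classical
  set X : ℕ → ℂ := fun k => if h : k < n then x ⟨k, h⟩ else 1 with hXdef
  have hXx : ∀ k (hk : k < n), X k = x ⟨k, hk⟩ := by
    intro k hk
    simp [hXdef, hk]
  have hX : ∀ k, X k ≠ 0 := by
    intro k
    by_cases h : k < n
    · rw [hXx k h]
      intro h0
      have h1 := (sqam_abs hD (hx ⟨k, h⟩)).1
      rw [h0] at h1
      simp at h1
    · simp [hXdef, h]
  set s : Fin n → ℂ := fun i => stdSeq X i with hsdef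
  have hsabs : ∀ i : Fin n, ‖s i‖ = ‖x i‖ := by
    intro i
    show ‖stdSeq X i‖ = _
    rw [stdSeq_abs X hX, hXx i i.isLt]
  have hsre : ∀ ℓ : ℕ, ∀ h : ℓ + 1 < n,
      (s ⟨ℓ + 1, h⟩ * (starRingEnd ℂ) (s ⟨ℓ, by omega⟩)).re
        = (x ⟨ℓ + 1, h⟩ * (starRingEnd ℂ) (x ⟨ℓ, by omega⟩)).re := by
    intro ℓ h
    show (stdSeq X (ℓ+1) * (starRingEnd ℂ) (stdSeq X ℓ)).re = _
    rw [stdSeq_prod_re X hX, hXx (ℓ+1) h, hXx ℓ (by omega)]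
  have hsq : SqEquiv s x := by
    constructor
    · intro i
      rw [hsabs i]
    · intro ℓ h
      rw [psi_eq_s12, psi_eq_s12, hsabs ⟨ℓ, by omega⟩, hsabs ⟨ℓ + 1, h⟩, hsre ℓ h]
  have hstd : Standard s := by
    constructor
    · intro h0
      constructor
      · show ((‖X 0‖ : ℝ) : ℂ).im = 0
        simp
      · show 0 < ((‖X 0‖ : ℝ) : ℂ).re
        simpa using norm_pos_iff.mpr (hX 0)
    · intro ℓ h
      exact arg2pi_mem_of_im_nonneg (stdSeq_prod_im X hX ℓ)
  have hmem : ∀ i : Fin n, s i ∈ sqamK D np := by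
    intro i
    obtain ⟨M, hM⟩ := stdSeq_exp hD (show 0 < np by omega) X hX
      (fun k hk => by rw [hXx k hk]; exact hx _) i i.isLt
    show stdSeq X i ∈ sqamK D np
    rw [hM]
    have hDmem : ‖X i‖ ∈ D := by
      rw [hXx i i.isLt]
      exact (sqam_abs hD (hx _)).2
    exact mem_sqamK_int (by omega) hDmem M
  refine ⟨s, ⟨hmem, hsq, hstd⟩, ?_⟩
  rintro y ⟨hy1, hy2, hy3⟩
  have hynz : ∀ i, y i ≠ 0 := by
    intro i h0
    have h1 := hy2.1 i
    rw [h0] at h1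
    simp only [norm_zero] at h1
    have h2 := (sqam_abs hD (hx i)).1
    nlinarith [h1, h2]
  have habsyx : ∀ i, ‖y i‖ = ‖x i‖ := fun i =>
    sq_abs_eq (norm_nonneg _) (norm_nonneg _) (hy2.1 i)
  have habs : ∀ i, ‖y i‖ = ‖s i‖ := fun i => by
    rw [habsyx i, ← hsabs i]
  have hre : ∀ ℓ : ℕ, ∀ h : ℓ + 1 < n,
      (y ⟨ℓ + 1, h⟩ * (starRingEnd ℂ) (y ⟨ℓ, by omega⟩)).re
        = (s ⟨ℓ + 1, h⟩ * (starRingEnd ℂ) (s ⟨ℓ, by omega⟩)).re := by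
    intro ℓ h
    exact re_of_psi (habs _) (habs _) ((hy2.2 ℓ h).trans (hsq.2 ℓ h).symm)
  exact std_unique y s hynz habs hre hy3 hstd
end

section
/- Let n ≥ 2 and let x, x̃ ∈ ℂⁿ have equal signatures Υ(x) = Υ(x̃), where all components are nonzero. If additionally arg(x_{ℓ+1}·conj(x_ℓ)) = arg(x̃_{ℓ+1}·conj(x̃_ℓ)) for all ℓ ∈ {0,…,n−2} and arg(x_0) = arg(x̃_0), then x = x̃. -/
lemma arg_eq_of_arg2pi_eq {w z : ℂ} (h : arg2pi w = arg2pi z) :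
    Complex.arg w = Complex.arg z := by
  unfold arg2pi at h
  have hw1 := Complex.neg_pi_lt_arg w
  have hw2 := Complex.arg_le_pi w
  have hz1 := Complex.neg_pi_lt_arg z
  have hz2 := Complex.arg_le_pi z
  have hpi := Real.pi_pos
  split_ifs at h with h1 h2 h2 <;> linarith

lemma eq_of_abs_arg2pi {w z : ℂ} (habs : ‖w‖ = ‖z‖)
    (harg : arg2pi w = arg2pi z) : w = z :=
  Complex.ext_norm_arg habs (arg_eq_of_arg2pi_eq harg)

theorem eq_of_signature_and_phases (n : ℕ) (hn : 2 ≤ n) (x y : Fin n → ℂ)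
    (hx : ∀ i, x i ≠ 0) (hy : ∀ i, y i ≠ 0)
    (hsig : SqEquiv x y)
    (hinc : ∀ ℓ : ℕ, ∀ h : ℓ + 1 < n,
      arg2pi (x ⟨ℓ + 1, h⟩ * (starRingEnd ℂ) (x ⟨ℓ, by omega⟩)) =
      arg2pi (y ⟨ℓ + 1, h⟩ * (starRingEnd ℂ) (y ⟨ℓ, by omega⟩)))
    (h0 : arg2pi (x ⟨0, by omega⟩) = arg2pi (y ⟨0, by omega⟩)) :
    x = y := by
  have habs : ∀ i, ‖x i‖ = ‖y i‖ := by
    intro i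
    have := hsig.1 i
    nlinarith [norm_nonneg (x i), norm_nonneg (y i)]
  have key : ∀ k : ℕ, ∀ hk : k < n, x ⟨k, hk⟩ = y ⟨k, hk⟩ := by
    intro k
    induction k with
    | zero => intro hk; exact eq_of_abs_arg2pi (habs _) h0
    | succ k ih =>
      intro hk
      have hk' : k < n := by omega
      have hxy : x ⟨k, hk'⟩ = y ⟨k, hk'⟩ := ih hk'
      have habsm : ‖x ⟨k + 1, hk⟩ * (starRingEnd ℂ) (x ⟨k, hk'⟩)‖ =
          ‖y ⟨k + 1, hk⟩ * (starRingEnd ℂ) (y ⟨k, hk'⟩)‖ := by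
        simp [map_mul, habs ⟨k + 1, hk⟩, habs ⟨k, hk'⟩]
      have hprod := eq_of_abs_arg2pi habsm (hinc k hk)
      rw [hxy] at hprod
      have hne : (starRingEnd ℂ) (y ⟨k, hk'⟩) ≠ 0 := by
        simpa using hy ⟨k, hk'⟩
      exact mul_right_cancel₀ hne hprod
  funext i
  have := key i.val i.isLt
  simpa using this
end
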